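/- Let G be a group in 𝒞_D containing all zero-distributed pairs ({C_n}, 0) with {C_n} ∼_σ 0. Assume (i) the set of symbols of G, {k : ∃ {A_n}, ({A_n},k) ∈ G}, is dense in the space of measurable functions D → ℂ with respect to the metric d_m, and (ii) G is closed: whenever ({B_{n,m}}_n, k_m) ∈ G for all m, d_acs({B_{n,m}}_n, {A_n}) → 0 and d_m(k_m, k) → 0, then ({A_n}, k) ∈ G. Then every measurable function k : D → ℂ is a symbol for G, i.e., there exists {A_n} ∈ 𝔈 with ({A_n}, k) ∈ G. -/

import Mathlib

open MeasureTheory Filter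
open scoped ENNReal NNReal

/-- The singular values of a complex square matrix, arranged in non-increasing order:
`sv A 0 = σ₁(A) ≥ sv A 1 = σ₂(A) ≥ …` (the square roots of the eigenvalues of `Aᴴ * A`). -/
noncomputable def sv {n : ℕ} (A : Matrix (Fin n) (Fin n) ℂ) : Fin n → ℝ :=
  fun i =>
    (fun j => Real.sqrt ((Matrix.isHermitian_conjTranspose_mul_self A).eigenvalues j))
      (Tuple.sort (fun j => Real.sqrt ((Matrix.isHermitian_conjTranspose_mul_self A).eigenvalues j))
        i.rev)

/-- `p(A) := min_{1 ≤ i ≤ n} ((i-1)/n + σᵢ(A))` (here `i : Fin n` plays the role of `i-1`). -/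
noncomputable def pA {n : ℕ} (A : Matrix (Fin n) (Fin n) ℂ) : ℝ :=
  ⨅ i : Fin n, (((i : ℕ) : ℝ) / n + sv A i)

/-- `ρ({A_n}) := limsup_{n→∞} p(A_n)`, valued in `[0,∞]`. -/
noncomputable def rho (A : (n : ℕ) → Matrix (Fin n) (Fin n) ℂ) : ℝ≥0∞ :=
  Filter.limsup (fun n => ENNReal.ofReal (pA (A n))) Filter.atTop

/-- The a.c.s. pseudometric `d_acs({A_n},{B_n}) := ρ({A_n − B_n})`. -/
noncomputable def dacs (A B : (n : ℕ) → Matrix (Fin n) (Fin n) ℂ) : ℝ≥0∞ :=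
  rho (fun n => A n - B n)

/-- `{A_n} ∼_σ k` : the sequence `{A_n}` has spectral (singular value) symbol `k` on `D`. -/
def SpecSymb {d : ℕ} (D : Set (Fin d → ℝ)) (A : (n : ℕ) → Matrix (Fin n) (Fin n) ℂ)
    (k : (Fin d → ℝ) → ℂ) : Prop :=
  ∀ F : ℝ → ℂ, Continuous F → HasCompactSupport F →
    Filter.Tendsto (fun n : ℕ => (n : ℂ)⁻¹ * ∑ i : Fin n, F (sv (A n) i)) Filter.atTop
      (nhds ((volume D).toReal⁻¹ • ∫ x in D, F ‖k x‖))

/-- `p_m(f) := inf_{E ⊆ D measurable} ( |D∖E|/|D| + esssup_{x∈E} |f(x)| )`, valued in `[0,∞]`. -/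
noncomputable def pm {d : ℕ} (D : Set (Fin d → ℝ)) (f : (Fin d → ℝ) → ℂ) : ℝ≥0∞ :=
  ⨅ (E : Set (Fin d → ℝ)) (_ : MeasurableSet E) (_ : E ⊆ D),
    (volume (D \ E) / volume D + essSup (fun x => (‖f x‖₊ : ℝ≥0∞)) (volume.restrict E))

/-- `d_m(f,g) := p_m(f − g)`. -/
noncomputable def dm {d : ℕ} (D : Set (Fin d → ℝ)) (f g : (Fin d → ℝ) → ℂ) : ℝ≥0∞ :=
  pm D (fun x => f x - g x)

/-- A "group in 𝒞_D": a set `G` of pairs `({A_n}, k)` with `k` measurable and `{A_n} ∼_σ k`,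
closed under addition and negation. -/
def IsGroupIn {d : ℕ} (D : Set (Fin d → ℝ))
    (G : Set (((n : ℕ) → Matrix (Fin n) (Fin n) ℂ) × ((Fin d → ℝ) → ℂ))) : Prop :=
  (∀ p ∈ G, Measurable p.2 ∧ SpecSymb D p.1 p.2) ∧
  (∀ p ∈ G, ∀ q ∈ G, ((fun n => p.1 n + q.1 n), p.2 + q.2) ∈ G) ∧
  (∀ p ∈ G, ((fun n => -(p.1 n)), -p.2) ∈ G)

/-!
Pick symbols `h m` of `G`, realized by sequences `B m`, with `d_m(k, h m) < 2⁻¹ ^ (m + 1)`.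
As `G` is a group, `B m - B l` has symbol `h m - h l`, and a sequence with symbol `g` satisfies
`ρ ≤ p_m(g)` once `p_m(g) < 1`: if `|g| ≤ s` on `E ⊆ D`, testing the symbol against a bump equal
to `1` on `[-s, s]` shows that asymptotically at most a fraction `|D \ E| / |D| + ε` of the
singular values exceeds `s + ε`. So `(B m)` is Cauchy for `d_acs`, a diagonal sequence
`A n = B (φ n) n` is its limit, and closedness of `G` gives `(A, k) ∈ G`.
-/

open scoped Finset Topology

lemma card_filter_le_card_sub_sum {ι : Type*} [Fintype ι] (f : ι → ℝ) {F : ℝ → ℝ} {t : ℝ}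
    (hF1 : ∀ x, F x ≤ 1) (hF0 : ∀ x, t ≤ x → F x = 0) :
    (#{i | t ≤ f i} : ℝ) ≤ Fintype.card ι - ∑ i, F (f i) := by
  classical
  have hsum : ∑ i, F (f i) ≤ #{i | ¬ t ≤ f i} := by
    rw [← Finset.sum_filter_add_sum_filter_not Finset.univ (fun i => t ≤ f i),
      Finset.sum_eq_zero fun i hi => hF0 _ (Finset.mem_filter.1 hi).2, zero_add]
    simpa using Finset.sum_le_card_nsmul _ _ 1 fun i _ => hF1 (f i)
  have hcard := Finset.card_filter_add_card_filter_not (s := Finset.univ) (fun i => t ≤ f i)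
  rw [Finset.card_univ] at hcard
  rw [← hcard]
  push_cast
  linarith

lemma measureReal_le_setIntegral_of_ae_eq_one {α : Type*} [MeasurableSpace α] {μ : Measure α}
    {φ : α → ℝ} {D E : Set α} (hφ : IntegrableOn φ D μ) (hφ0 : ∀ x, 0 ≤ φ x) (hED : E ⊆ D)
    (hE : ∀ᵐ x ∂μ.restrict E, φ x = 1) : μ.real E ≤ ∫ x in D, φ x ∂μ :=
  calc μ.real E = ∫ x in E, φ x ∂μ := by simp [integral_congr_ae hE]
    _ ≤ ∫ x in D, φ x ∂μ :=
      setIntegral_mono_set hφ (Eventually.of_forall hφ0) (Eventually.of_forall hED)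

lemma exists_eventually_diagonal {P : ℕ → ℕ → ℕ → Prop}
    (h : ∀ m l, m ≤ l → ∀ᶠ n in atTop, P m l n) :
    ∃ φ : ℕ → ℕ, ∀ m, ∀ᶠ n in atTop, P m (φ n) n := by
  classical
  choose N hN using fun l => eventually_atTop.1
    ((Filter.eventually_all_finite (Set.finite_Iic l)).2 fun m hm => h m l hm)
  let Q (n l : ℕ) : Prop := ∀ k ≤ l, N k ≤ n
  refine ⟨fun n => Nat.findGreatest (Q n) n, fun m => ?_⟩
  filter_upwards [eventually_ge_atTop m, (Filter.eventually_all_finite (Set.finite_Iic m)).2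
    fun k _ => eventually_ge_atTop (N k)] with n hmn hNn
  have hm : m ≤ Nat.findGreatest (Q n) n := Nat.le_findGreatest hmn hNn
  have hQ : Q n (Nat.findGreatest (Q n) n) := Nat.findGreatest_spec hmn hNn
  exact hN _ n (hQ _ le_rfl) m hm

section MeasureDistance

variable {d : ℕ} {D : Set (Fin d → ℝ)}

lemma pm_le {f : (Fin d → ℝ) → ℂ} {E : Set (Fin d → ℝ)} (hE : MeasurableSet E) (hED : E ⊆ D) :
    pm D f ≤ volume (D \ E) / volume D + essSup (fun x => (‖f x‖₊ : ℝ≥0∞)) (volume.restrict E) :=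
  iInf₂_le_of_le E hE (iInf_le _ hED)

lemma exists_lt_of_pm_lt {f : (Fin d → ℝ) → ℂ} {c : ℝ≥0∞} (h : pm D f < c) :
    ∃ E, MeasurableSet E ∧ E ⊆ D ∧
      volume (D \ E) / volume D + essSup (fun x => (‖f x‖₊ : ℝ≥0∞)) (volume.restrict E) < c := by
  simpa only [pm, iInf_lt_iff, exists_prop] using h

lemma pm_add_le (f g : (Fin d → ℝ) → ℂ) : pm D (fun x => f x + g x) ≤ pm D f + pm D g := by
  refine ENNReal.le_iInf_add_iInf fun E₁ E₂ => ENNReal.le_iInf_add_iInf fun hE₁ hE₂ =>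
    ENNReal.le_iInf_add_iInf fun hE₁D _ => ?_
  have hvol : volume (D \ (E₁ ∩ E₂)) / volume D ≤
      volume (D \ E₁) / volume D + volume (D \ E₂) / volume D := by
    rw [← ENNReal.add_div, Set.sdiff_inter]
    exact ENNReal.div_le_div_right (measure_union_le _ _) _
  have hsup : essSup (fun x => (‖f x + g x‖₊ : ℝ≥0∞)) (volume.restrict (E₁ ∩ E₂)) ≤
      essSup (fun x => (‖f x‖₊ : ℝ≥0∞)) (volume.restrict E₁) +
        essSup (fun x => (‖g x‖₊ : ℝ≥0∞)) (volume.restrict E₂) :=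
    calc _ ≤ essSup ((fun x => (‖f x‖₊ : ℝ≥0∞)) + fun x => (‖g x‖₊ : ℝ≥0∞))
          (volume.restrict (E₁ ∩ E₂)) :=
          essSup_mono_ae (Eventually.of_forall fun x =>
            (ENNReal.coe_le_coe.2 (nnnorm_add_le _ _)).trans_eq (ENNReal.coe_add _ _))
      _ ≤ _ := ENNReal.essSup_add_le _ _
      _ ≤ _ := add_le_add
          (essSup_mono_measure' (Measure.restrict_mono Set.inter_subset_left le_rfl))
          (essSup_mono_measure' (Measure.restrict_mono Set.inter_subset_right le_rfl))
  calc pm D (fun x => f x + g x)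
      ≤ _ := pm_le (hE₁.inter hE₂) (Set.inter_subset_left.trans hE₁D)
    _ ≤ _ := add_le_add hvol hsup
    _ = _ := add_add_add_comm _ _ _ _

lemma dm_comm (f g : (Fin d → ℝ) → ℂ) : dm D f g = dm D g f := by
  simp only [dm, pm, ← nnnorm_neg (f _ - g _), neg_sub]

lemma dm_triangle (f g h : (Fin d → ℝ) → ℂ) : dm D f h ≤ dm D f g + dm D g h := by
  simpa only [dm, sub_add_sub_cancel] using
    pm_add_le (D := D) (fun x => f x - g x) (fun x => g x - h x)

end MeasureDistance

lemma sv_antitone {n : ℕ} (A : Matrix (Fin n) (Fin n) ℂ) : Antitone (sv A) :=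
  fun _ _ hij => Tuple.monotone_sort
    (fun j => Real.sqrt ((Matrix.isHermitian_conjTranspose_mul_self A).eigenvalues j))
    (Fin.rev_le_rev.mpr hij)

lemma pA_le_card_div_add {n : ℕ} (A : Matrix (Fin n) (Fin n) ℂ) {t : ℝ}
    (hlt : #{i | t ≤ sv A i} < n) : pA A ≤ (#{i | t ≤ sv A i} : ℝ) / n + t := by
  classical
  set r := #{i | t ≤ sv A i}
  have hsv : sv A ⟨r, hlt⟩ < t := by
    by_contra! h
    have : Finset.Iic (⟨r, hlt⟩ : Fin n) ⊆ Finset.univ.filter (fun i => t ≤ sv A i) := fun i hi =>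
      Finset.mem_filter.2 ⟨Finset.mem_univ _, h.trans (sv_antitone A (Finset.mem_Iic.1 hi))⟩
    have := Finset.card_le_card this
    simp [r] at this
  have hbdd : BddBelow (Set.range fun i : Fin n => ((i : ℕ) : ℝ) / n + sv A i) :=
    ⟨0, Set.forall_mem_range.2 fun i => add_nonneg (by positivity) (Real.sqrt_nonneg _)⟩
  exact (ciInf_le hbdd ⟨r, hlt⟩).trans (by simp only; linarith)

lemma pA_le_one_sub_average_add {n : ℕ} (A : Matrix (Fin n) (Fin n) ℂ) {F : ℝ → ℝ} {t : ℝ}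
    (hF1 : ∀ x, F x ≤ 1) (hF0 : ∀ x, t ≤ x → F x = 0) (hpos : 0 < ∑ i, F (sv A i)) :
    pA A ≤ 1 - (n : ℝ)⁻¹ * ∑ i, F (sv A i) + t := by
  have hcard := card_filter_le_card_sub_sum (sv A) hF1 hF0
  rw [Fintype.card_fin] at hcard
  have hlt : #{i | t ≤ sv A i} < n := by exact_mod_cast hcard.trans_lt (sub_lt_self _ hpos)
  have hn : (0 : ℝ) < n := by exact_mod_cast (Nat.zero_le _).trans_lt hlt
  calc pA A ≤ (#{i | t ≤ sv A i} : ℝ) / n + t := pA_le_card_div_add A hlt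
    _ ≤ (n - ∑ i, F (sv A i)) / n + t := by gcongr
    _ = _ := by field_simp

lemma SpecSymb.tendsto_average {d : ℕ} {D : Set (Fin d → ℝ)}
    {C : (n : ℕ) → Matrix (Fin n) (Fin n) ℂ} {g : (Fin d → ℝ) → ℂ} (hC : SpecSymb D C g)
    {F : ℝ → ℝ} (hF : Continuous F) (hFs : HasCompactSupport F) :
    Tendsto (fun n : ℕ => (n : ℝ)⁻¹ * ∑ i, F (sv (C n) i)) atTop
      (𝓝 ((volume D).toReal⁻¹ * ∫ x in D, F ‖g x‖)) := by
  have h := (Complex.continuous_re.tendsto _).comp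
    (hC (fun x => F x) (Complex.continuous_ofReal.comp hF) (hFs.comp_left Complex.ofReal_zero))
  simpa [Function.comp_def, integral_complex_ofReal] using h

lemma eventually_pA_le_of_specSymb {d : ℕ} {D : Set (Fin d → ℝ)} (hDfin : volume D < ∞)
    {C : (n : ℕ) → Matrix (Fin n) (Fin n) ℂ} {g : (Fin d → ℝ) → ℂ} (hg : Measurable g)
    (hC : SpecSymb D C g) {E : Set (Fin d → ℝ)} (hED : E ⊆ D) (hE0 : 0 < volume.real E)
    {s η : ℝ} (hs : 0 ≤ s) (hη : 0 < η) (hgE : ∀ᵐ x ∂volume.restrict E, ‖g x‖ ≤ s) :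
    ∀ᶠ n in atTop, pA (C n) ≤ 1 - volume.real E / volume.real D + s + 3 * η := by
  let F : ContDiffBump (0 : ℝ) := ⟨s + η, s + 2 * η, by positivity, by linarith⟩
  have hF0 : ∀ x, s + 2 * η ≤ x → F x = 0 := fun x hx =>
    F.zero_of_le_dist (hx.trans (by simpa [Real.dist_eq] using le_abs_self x))
  have hFE : ∀ᵐ x ∂volume.restrict E, F ‖g x‖ = 1 := hgE.mono fun x hx =>
    F.one_of_mem_closedBall (by simpa using hx.trans (le_add_of_nonneg_right hη.le))
  have hFint : IntegrableOn (fun x => F ‖g x‖) D volume :=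
    Measure.integrableOn_of_bounded hDfin.ne
      (F.continuous.measurable.comp hg.norm).aestronglyMeasurable
      (Eventually.of_forall fun x => by simpa [abs_of_nonneg F.nonneg] using F.le_one)
  have hL : volume.real E / volume.real D ≤ (volume D).toReal⁻¹ * ∫ x in D, F ‖g x‖ := by
    rw [div_eq_inv_mul]
    exact mul_le_mul_of_nonneg_left
      (measureReal_le_setIntegral_of_ae_eq_one hFint (fun _ => F.nonneg) hED hFE) (by positivity)
  have hq : 0 < volume.real E / volume.real D :=
    div_pos hE0 (hE0.trans_le (measureReal_mono hED hDfin.ne))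
  have hlim := hC.tendsto_average F.continuous F.hasCompactSupport
  filter_upwards [hlim.eventually (lt_mem_nhds (hq.trans_le hL)),
    hlim.eventually (lt_mem_nhds (sub_lt_self _ hη))] with n hpos hclose
  have hsum : 0 < ∑ i, F (sv (C n) i) := pos_of_mul_pos_right hpos (inv_nonneg.2 n.cast_nonneg)
  have := pA_le_one_sub_average_add (C n) (fun _ => F.le_one) hF0 hsum
  linarith

lemma rho_le_ofReal_of_eventually {C : (n : ℕ) → Matrix (Fin n) (Fin n) ℂ} {c : ℝ}
    (h : ∀ᶠ n in atTop, pA (C n) ≤ c) : rho C ≤ ENNReal.ofReal c :=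
  limsup_le_of_le (by isBoundedDefault) (h.mono fun _ hn => ENNReal.ofReal_le_ofReal hn)

lemma rho_le_of_specSymb {d : ℕ} {D : Set (Fin d → ℝ)} (hDfin : volume D < ∞)
    {C : (n : ℕ) → Matrix (Fin n) (Fin n) ℂ} {g : (Fin d → ℝ) → ℂ}
    (hg : Measurable g) (hC : SpecSymb D C g) {E : Set (Fin d → ℝ)} (hE : MeasurableSet E)
    (hED : E ⊆ D) (hE0 : 0 < volume E)
    (hsup : essSup (fun x => (‖g x‖₊ : ℝ≥0∞)) (volume.restrict E) ≠ ∞) :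
    rho C ≤ volume (D \ E) / volume D + essSup (fun x => (‖g x‖₊ : ℝ≥0∞)) (volume.restrict E) := by
  set s := (essSup (fun x => (‖g x‖₊ : ℝ≥0∞)) (volume.restrict E)).toReal
  have hs : 0 ≤ s := ENNReal.toReal_nonneg
  have hgE : ∀ᵐ x ∂volume.restrict E, ‖g x‖ ≤ s :=
    (ENNReal.ae_le_essSup _).mono fun x hx => by simpa using ENNReal.toReal_mono hsup hx
  have hEfin : volume E ≠ ∞ := ((measure_mono hED).trans_lt hDfin).ne
  have hE0' : 0 < volume.real E := ENNReal.toReal_pos hE0.ne' hEfin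
  have hVD : 0 < volume.real D := hE0'.trans_le (measureReal_mono hED hDfin.ne)
  have hq1 : volume.real E / volume.real D ≤ 1 :=
    div_le_one_of_le₀ (measureReal_mono hED hDfin.ne) hVD.le
  have hrhs : volume (D \ E) / volume D + essSup (fun x => (‖g x‖₊ : ℝ≥0∞)) (volume.restrict E) =
      ENNReal.ofReal (1 - volume.real E / volume.real D + s) := by
    rw [one_sub_div hVD.ne', ← measureReal_sdiff hED hE hDfin.ne,
      ENNReal.ofReal_add (by positivity) hs, ENNReal.ofReal_div_of_pos hVD,
      ofReal_measureReal ((measure_mono Set.sdiff_subset).trans_lt hDfin).ne,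
      ofReal_measureReal hDfin.ne, ENNReal.ofReal_toReal hsup]
  rw [hrhs]
  refine ENNReal.le_of_forall_pos_le_add fun ε hε _ => ?_
  calc rho C ≤ ENNReal.ofReal (1 - volume.real E / volume.real D + s + 3 * (ε / 3)) :=
        rho_le_ofReal_of_eventually
          (eventually_pA_le_of_specSymb hDfin hg hC hED hE0' hs (by positivity) hgE)
    _ = ENNReal.ofReal (1 - volume.real E / volume.real D + s) + ε := by
      rw [mul_div_cancel₀ _ three_ne_zero, ENNReal.ofReal_add (by linarith) ε.coe_nonneg,
        ENNReal.ofReal_coe_nnreal]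

lemma rho_le_pm {d : ℕ} {D : Set (Fin d → ℝ)} (hD0 : 0 < volume D) (hDfin : volume D < ∞)
    {C : (n : ℕ) → Matrix (Fin n) (Fin n) ℂ} {g : (Fin d → ℝ) → ℂ} (hg : Measurable g)
    (hC : SpecSymb D C g) (hpm : pm D g < 1) : rho C ≤ pm D g := by
  refine le_of_forall_gt fun c hc => ?_
  obtain ⟨E, hE, hED, hlt⟩ := exists_lt_of_pm_lt (lt_min hc hpm)
  have hlt1 := hlt.trans_le (min_le_right _ _)
  -- a null `E` or an infinite essential supremum would make the bracket at least `1`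
  have hE0 : 0 < volume E := by
    refine pos_of_ne_zero fun h0 => hlt1.not_ge ?_
    rw [measure_sdiff_null h0, ENNReal.div_self hD0.ne' hDfin.ne]
    exact le_self_add
  have hsup : essSup (fun x => (‖g x‖₊ : ℝ≥0∞)) (volume.restrict E) ≠ ∞ :=
    fun h => hlt1.not_ge (by simp [h])
  exact (rho_le_of_specSymb hDfin hg hC hE hED hE0 hsup).trans_lt (hlt.trans_le (min_le_left _ _))

lemma exists_tendsto_dacs_of_cauchy {B : ℕ → (n : ℕ) → Matrix (Fin n) (Fin n) ℂ}
    {b : ℕ → ℝ≥0∞} (hb : Tendsto b atTop (𝓝 0)) (hB : ∀ m l, m ≤ l → dacs (B m) (B l) < b m) :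
    ∃ A, Tendsto (fun m => dacs (B m) A) atTop (𝓝 0) := by
  obtain ⟨φ, hφ⟩ := exists_eventually_diagonal
    (P := fun m l n => ENNReal.ofReal (pA (B m n - B l n)) < b m)
    fun m l hml => eventually_lt_of_limsup_lt (hB m l hml)
  refine ⟨fun n => B (φ n) n, tendsto_of_tendsto_of_tendsto_of_le_of_le tendsto_const_nhds hb
    (fun _ => zero_le) fun m => ?_⟩
  exact limsup_le_of_le (by isBoundedDefault) ((hφ m).mono fun _ hn => hn.le)

section GroupIn

variable {d : ℕ} {D : Set (Fin d → ℝ)}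
  {G : Set (((n : ℕ) → Matrix (Fin n) (Fin n) ℂ) × ((Fin d → ℝ) → ℂ))}

lemma IsGroupIn.sub_mem (hG : IsGroupIn D G) {p q} (hp : p ∈ G) (hq : q ∈ G) :
    ((fun n => p.1 n - q.1 n), p.2 - q.2) ∈ G := by
  simpa only [sub_eq_add_neg] using hG.2.1 p hp _ (hG.2.2 q hq)

lemma IsGroupIn.dacs_le_dm (hG : IsGroupIn D G) (hD0 : 0 < volume D) (hDfin : volume D < ∞)
    {A B : (n : ℕ) → Matrix (Fin n) (Fin n) ℂ} {h h' : (Fin d → ℝ) → ℂ}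
    (hA : (A, h) ∈ G) (hB : (B, h') ∈ G) (hlt : dm D h h' < 1) : dacs A B ≤ dm D h h' :=
  have hsub := hG.1 _ (hG.sub_mem hA hB)
  rho_le_pm hD0 hDfin hsub.1 hsub.2 hlt

end GroupIn

theorem every_function_is_symbol_general {d : ℕ} (D : Set (Fin d → ℝ))
    (hD0 : 0 < volume D) (hDfin : volume D < ⊤)
    (G : Set (((n : ℕ) → Matrix (Fin n) (Fin n) ℂ) × ((Fin d → ℝ) → ℂ)))
    (hG : IsGroupIn D G)
    (hdense : ∀ k : (Fin d → ℝ) → ℂ, Measurable k → ∀ ε : ℝ≥0∞, 0 < ε →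
      ∃ h : (Fin d → ℝ) → ℂ, (∃ A, (A, h) ∈ G) ∧ dm D k h < ε)
    (hclosed : ∀ (Bm : ℕ → (n : ℕ) → Matrix (Fin n) (Fin n) ℂ)
      (km : ℕ → (Fin d → ℝ) → ℂ)
      (A : (n : ℕ) → Matrix (Fin n) (Fin n) ℂ) (k : (Fin d → ℝ) → ℂ),
      Measurable k → (∀ m, (Bm m, km m) ∈ G) →
      Filter.Tendsto (fun m => dacs (Bm m) A) Filter.atTop (nhds 0) →
      Filter.Tendsto (fun m => dm D (km m) k) Filter.atTop (nhds 0) → (A, k) ∈ G) :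
    ∀ k : (Fin d → ℝ) → ℂ, Measurable k →
      ∃ A : (n : ℕ) → Matrix (Fin n) (Fin n) ℂ, (A, k) ∈ G := by
  intro k hk
  set ε : ℕ → ℝ≥0∞ := fun m => 2⁻¹ ^ (m + 1)
  have hε_anti : Antitone ε := fun m l hml => pow_le_pow_right_of_le_one' (by norm_num) (by omega)
  have hε_lim : Tendsto ε atTop (𝓝 0) :=
    (ENNReal.tendsto_pow_atTop_nhds_zero_iff.2 (by norm_num)).comp (tendsto_add_atTop_nat 1)
  have hε_le : ∀ m, ε m + ε m ≤ 1 := fun m =>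
    (add_le_add (hε_anti m.zero_le) (hε_anti m.zero_le)).trans_eq
      (by simp [ε, ENNReal.inv_two_add_inv_two])
  choose h hrealized hdist using fun m => hdense k hk (ε m) (ENNReal.pow_pos (by norm_num) _)
  choose B hB using hrealized
  have hcauchy : ∀ m l, m ≤ l → dm D (h m) (h l) < ε m + ε m := fun m l hml =>
    calc dm D (h m) (h l) ≤ dm D (h m) k + dm D k (h l) := dm_triangle _ _ _
      _ = dm D k (h m) + dm D k (h l) := by rw [dm_comm]
      _ < ε m + ε m := ENNReal.add_lt_add (hdist m) ((hdist l).trans_le (hε_anti hml))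
  obtain ⟨A, hA⟩ := exists_tendsto_dacs_of_cauchy (by simpa using hε_lim.add hε_lim)
    fun m l hml => (hG.dacs_le_dm hD0 hDfin (hB m) (hB l)
      ((hcauchy m l hml).trans_le (hε_le m))).trans_lt (hcauchy m l hml)
  refine ⟨A, hclosed B h A k hk hB hA ?_⟩
  exact tendsto_of_tendsto_of_tendsto_of_le_of_le tendsto_const_nhds hε_lim (fun _ => zero_le)
    fun m => (dm_comm _ _).trans_le (hdist m).le

/-- if a group `G` in `𝒞_D` contains all zero-distributed pairs, has a dense set
of symbols, and is closed, then every measurable function is a symbol for `G`. -/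
theorem every_function_is_symbol {d : ℕ} (D : Set (Fin d → ℝ))
    (hD : MeasurableSet D) (hD0 : 0 < volume D) (hDfin : volume D < ⊤)
    (G : Set (((n : ℕ) → Matrix (Fin n) (Fin n) ℂ) × ((Fin d → ℝ) → ℂ)))
    (hG : IsGroupIn D G)
    (hZ : ∀ C : (n : ℕ) → Matrix (Fin n) (Fin n) ℂ,
      SpecSymb D C (fun _ => 0) → (C, fun _ => (0 : ℂ)) ∈ G)
    (hdense : ∀ k : (Fin d → ℝ) → ℂ, Measurable k → ∀ ε : ℝ≥0∞, 0 < ε →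
      ∃ h : (Fin d → ℝ) → ℂ, (∃ A, (A, h) ∈ G) ∧ dm D k h < ε)
    (hclosed : ∀ (Bm : ℕ → (n : ℕ) → Matrix (Fin n) (Fin n) ℂ)
      (km : ℕ → (Fin d → ℝ) → ℂ)
      (A : (n : ℕ) → Matrix (Fin n) (Fin n) ℂ) (k : (Fin d → ℝ) → ℂ),
      Measurable k → (∀ m, (Bm m, km m) ∈ G) →
      Filter.Tendsto (fun m => dacs (Bm m) A) Filter.atTop (nhds 0) →
      Filter.Tendsto (fun m => dm D (km m) k) Filter.atTop (nhds 0) → (A, k) ∈ G) :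
    ∀ k : (Fin d → ℝ) → ℂ, Measurable k →
      ∃ A : (n : ℕ) → Matrix (Fin n) (Fin n) ℂ, (A, k) ∈ G :=
  every_function_is_symbol_general D hD0 hDfin G hG hdense hclosed
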